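/- arXiv:2303.05693 — 7 statements merged into one kernel-verified Lean document; each statement's English description precedes it below -/
import Mathlib

section
/- Let X be a mixed graph on n ≥ 2 vertices with underlying graph having positive vertex degrees d_1,…,d_n, and let R^ω(X) = D^{-1/2} H^ω(X) D^{-1/2} be its Hermitian Randić matrix of second kind. Then every eigenvalue λ of R^ω(X) satisfies −1 ≤ λ ≤ 1. -/
open Matrix Finset

/-- A mixed graph on `n` vertices: `U` is the un-oriented edge relation and
`O` is the oriented edge relation. -/
structure MixedGraph (n : ℕ) where
  U : Fin n → Fin n → Bool
  O : Fin n → Fin n → Bool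
  U_symm : ∀ i j, U i j = U j i
  U_irrefl : ∀ i, U i i = false
  O_irrefl : ∀ i, O i i = false
  O_asymm : ∀ i j, O i j = true → O j i = false
  UO_disjoint : ∀ i j, U i j = true → O i j = false

/-- The sixth root of unity `ω = (1 + i√3)/2`. -/
noncomputable def omegaC : ℂ := (1 + Complex.I * (Real.sqrt 3 : ℝ)) / 2

/-- The Hermitian adjacency matrix of second kind. -/
noncomputable def Hw {n : ℕ} (X : MixedGraph n) : Matrix (Fin n) (Fin n) ℂ :=
  fun i j =>
    if X.U i j then 1
    else if X.O i j then omegaC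
    else if X.O j i then (starRingEnd ℂ) omegaC
    else 0

/-- Adjacency in the underlying graph. -/
def MixedGraph.Adj {n : ℕ} (X : MixedGraph n) (i j : Fin n) : Bool :=
  X.U i j || X.O i j || X.O j i

/-- Degree of a vertex in the underlying graph. -/
def deg {n : ℕ} (X : MixedGraph n) (i : Fin n) : ℕ :=
  (Finset.univ.filter (fun j => X.Adj i j = true)).card

/-- The Hermitian Randić matrix of second kind, `R^ω(X) = D^{-1/2} H^ω(X) D^{-1/2}`. -/
noncomputable def Rw {n : ℕ} (X : MixedGraph n) : Matrix (Fin n) (Fin n) ℂ :=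
  fun i j => ((1 / Real.sqrt ((deg X i : ℝ) * (deg X j : ℝ)) : ℝ) : ℂ) * Hw X i j

lemma abs_omegaC : ‖omegaC‖ = 1 := by
  have h3 : Real.sqrt 3 ^ 2 = 3 := Real.sq_sqrt (by norm_num)
  have h : Complex.normSq omegaC = 1 := by
    simp [omegaC, Complex.normSq_apply, Complex.div_re, Complex.div_im, Complex.normSq]
    nlinarith [h3]
  rw [Complex.norm_def, h, Real.sqrt_one]

lemma abs_Hw {n : ℕ} (X : MixedGraph n) (i j : Fin n) :
    ‖Hw X i j‖ = if X.Adj i j then 1 else 0 := by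
  unfold Hw MixedGraph.Adj
  rcases hU : X.U i j with _ | _ <;> rcases hO : X.O i j with _ | _ <;>
    rcases hO' : X.O j i with _ | _ <;>
    simp [hU, hO, hO', abs_omegaC, Complex.norm_conj]

lemma adj_symm {n : ℕ} (X : MixedGraph n) (i j : Fin n) : X.Adj i j = X.Adj j i := by
  unfold MixedGraph.Adj
  rw [X.U_symm]
  cases X.U j i <;> cases X.O i j <;> cases X.O j i <;> rfl

theorem stmt4 {n : ℕ} (hn : 2 ≤ n) (X : MixedGraph n)
    (hd : ∀ i, 0 < deg X i) (lam : ℝ)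
    (hlam : ∃ v : Fin n → ℂ, v ≠ 0 ∧ (Rw X).mulVec v = (lam : ℂ) • v) :
    -1 ≤ lam ∧ lam ≤ 1 := by
  obtain ⟨v, hv, hmul⟩ := hlam
  set w : Fin n → ℝ := fun i => ‖v i‖ with hwdef
  set S : ℝ := ∑ i, w i ^ 2 with hSdef
  have hS : 0 < S := by
    obtain ⟨i, hi⟩ := Function.ne_iff.mp hv
    refine Finset.sum_pos' (fun i _ => sq_nonneg _) ⟨i, mem_univ i, ?_⟩
    have : 0 < ‖v i‖ := by
      simpa [norm_pos_iff] using hi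
    positivity
  -- eigenvalue identity
  have key : (lam : ℂ) * (S : ℂ) = ∑ i, ∑ j, (starRingEnd ℂ) (v i) * (Rw X i j * v j) := by
    have h1 : ∀ i, ∑ j, (starRingEnd ℂ) (v i) * (Rw X i j * v j)
        = (starRingEnd ℂ) (v i) * ((Rw X).mulVec v i) := by
      intro i
      simp [Matrix.mulVec, dotProduct, Finset.mul_sum]
    rw [Finset.sum_congr rfl fun i _ => h1 i]
    rw [hmul]
    simp only [Pi.smul_apply, smul_eq_mul]
    have h2 : ∀ x : Fin n, (starRingEnd ℂ) (v x) * ((lam:ℂ) * v x)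
        = (lam:ℂ) * ((w x ^ 2 : ℝ) : ℂ) := by
      intro x
      have hx : ((w x ^ 2 : ℝ) : ℂ) = (starRingEnd ℂ) (v x) * v x := by
        rw [hwdef]
        push_cast [Complex.sq_norm]
        rw [Complex.normSq_eq_conj_mul_self]
      rw [hx]; ring
    rw [Finset.sum_congr rfl fun x _ => h2 x, ← Finset.mul_sum]
    congr 1
    rw [hSdef]
    push_cast
    rfl
  have habs : |lam| * S ≤ S := by
    have h0 : |lam| * S = ‖(lam:ℂ) * (S:ℂ)‖ := by
      rw [norm_mul, Complex.norm_real, Complex.norm_real, Real.norm_eq_abs, Real.norm_eq_abs, abs_of_pos hS]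
    rw [h0, key]
    calc ‖∑ i, ∑ j, (starRingEnd ℂ) (v i) * (Rw X i j * v j)‖
        ≤ ∑ i, ∑ j, ‖(starRingEnd ℂ) (v i) * (Rw X i j * v j)‖ :=
          (norm_sum_le _ _).trans
            (Finset.sum_le_sum fun i _ => norm_sum_le _ _)
      _ ≤ ∑ i, ∑ j, (if X.Adj i j then
            (w i ^ 2 / (deg X i : ℝ) + w j ^ 2 / (deg X j : ℝ)) / 2 else 0) := by
          refine Finset.sum_le_sum fun i _ => Finset.sum_le_sum fun j _ => ?_
          have hdi : (0:ℝ) < (deg X i : ℝ) := by exact_mod_cast hd i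
          have hdj : (0:ℝ) < (deg X j : ℝ) := by exact_mod_cast hd j
          have hsi : (0:ℝ) < Real.sqrt (deg X i) := Real.sqrt_pos.mpr hdi
          have hsj : (0:ℝ) < Real.sqrt (deg X j) := Real.sqrt_pos.mpr hdj
          have habsR : ‖(starRingEnd ℂ) (v i) * (Rw X i j * v j)‖
              = w i * ((1 / Real.sqrt ((deg X i : ℝ) * (deg X j : ℝ)))
                  * (‖Hw X i j‖ * w j)) := by
            simp only [Rw, norm_mul, Complex.norm_conj, Complex.norm_real, Real.norm_eq_abs, hwdef]
            rw [abs_of_nonneg (by positivity : (0:ℝ) ≤ 1 / Real.sqrt ((deg X i:ℝ) * (deg X j:ℝ)))]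
            ring
          rw [habsR, abs_Hw]
          by_cases hA : X.Adj i j
          · simp only [hA, if_true, mul_one, one_mul]
            have hmuls : Real.sqrt ((deg X i : ℝ) * (deg X j : ℝ))
                = Real.sqrt (deg X i) * Real.sqrt (deg X j) := Real.sqrt_mul hdi.le _
            have heq : w i * (1 / Real.sqrt ((deg X i : ℝ) * (deg X j : ℝ)) * w j)
                = (w i / Real.sqrt (deg X i)) * (w j / Real.sqrt (deg X j)) := by
              rw [hmuls]; field_simp
            rw [heq]
            have h2ab := two_mul_le_add_sq (w i / Real.sqrt (deg X i))
              (w j / Real.sqrt (deg X j))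
            have hai : (w i / Real.sqrt (deg X i)) ^ 2 = w i ^ 2 / (deg X i : ℝ) := by
              rw [div_pow, Real.sq_sqrt hdi.le]
            have haj : (w j / Real.sqrt (deg X j)) ^ 2 = w j ^ 2 / (deg X j : ℝ) := by
              rw [div_pow, Real.sq_sqrt hdj.le]
            rw [hai, haj] at h2ab
            linarith
          · simp [hA]
      _ = S := by
          have hsplit : ∀ i j : Fin n, (if X.Adj i j then
              (w i ^ 2 / (deg X i : ℝ) + w j ^ 2 / (deg X j : ℝ)) / 2 else 0)
              = (if X.Adj i j then w i ^ 2 / (deg X i : ℝ) else 0) / 2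
                + (if X.Adj i j then w j ^ 2 / (deg X j : ℝ) else 0) / 2 := by
            intro i j; split <;> ring
          simp only [hsplit, Finset.sum_add_distrib, ← Finset.sum_div]
          have hrow : ∀ i : Fin n, ∑ j, (if X.Adj i j then w i ^ 2 / (deg X i : ℝ) else 0)
              = w i ^ 2 := by
            intro i
            rw [← Finset.sum_filter, Finset.sum_const, nsmul_eq_mul]
            have : ((Finset.univ.filter (fun j => X.Adj i j = true)).card : ℝ) = (deg X i : ℝ) := by
              simp [deg]
            rw [this]
            have hdne : ((deg X i : ℝ)) ≠ 0 := by
              have := hd i; positivity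
            rw [mul_comm]; exact div_mul_cancel₀ _ hdne
          have hcol : (∑ i, ∑ j, (if X.Adj i j then w j ^ 2 / (deg X j : ℝ) else 0)) = S := by
            rw [Finset.sum_comm]
            refine Finset.sum_congr rfl fun j _ => ?_
            rw [show (∑ i, (if X.Adj i j then w j ^ 2 / (deg X j : ℝ) else 0))
                = ∑ i, (if X.Adj j i then w j ^ 2 / (deg X j : ℝ) else 0) from
              Finset.sum_congr rfl fun i _ => by rw [adj_symm]]
            exact hrow j
          rw [Finset.sum_congr rfl fun i _ => hrow i, hcol]
          rw [hSdef]; ring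
  have hle : |lam| ≤ 1 := by
    by_contra h
    push_neg at h
    nlinarith
  exact abs_le.mp hle
end

section
/- Let X be a mixed graph on n ≥ 2 vertices and let λ_1 and λ_n be the smallest and largest eigenvalues of R^ω(X). Set S = ∑_{i∼j} 2/√(d_i d_j) + ∑_{i→j} 1/√(d_i d_j). Then λ_1 ≤ −S/(n(n−1)) and S/n ≤ λ_n. -/
open Matrix Finset

/-- `S = ∑_{i∼j} 2/√(d_i d_j) + ∑_{i→j} 1/√(d_i d_j)`, where the first sum is over
un-oriented edges (each counted once, i.e. twice as ordered pairs) and the second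
over oriented edges. -/
noncomputable def entrySum {n : ℕ} (X : MixedGraph n) : ℝ :=
  (∑ i, ∑ j, if X.U i j then 1 / Real.sqrt ((deg X i : ℝ) * (deg X j : ℝ)) else 0)
    + ∑ i, ∑ j, if X.O i j then 1 / Real.sqrt ((deg X i : ℝ) * (deg X j : ℝ)) else 0

/- ### Auxiliary lemmas -/

lemma omegaC_conj : (starRingEnd ℂ) omegaC = 1 - omegaC := by
  have h2 : ((starRingEnd ℂ) 2 : ℂ) = 2 := by simp [Complex.ext_iff]
  simp [omegaC, Complex.ext_iff, h2, Complex.div_re, Complex.div_im]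
  constructor <;> ring

lemma rayleigh {n : ℕ} {A : Matrix (Fin n) (Fin n) ℂ} (hA : A.IsHermitian) (x : Fin n → ℂ) :
    ∃ w : Fin n → ℝ, (∀ i, 0 ≤ w i) ∧ ((star x ⬝ᵥ x).re = ∑ i, w i) ∧
      (star x ⬝ᵥ A *ᵥ x).re = ∑ i, hA.eigenvalues i * w i := by
  set U : Matrix (Fin n) (Fin n) ℂ := (hA.eigenvectorUnitary : Matrix (Fin n) (Fin n) ℂ) with hU
  have hUU : U * star U = 1 := Matrix.mem_unitaryGroup_iff.mp hA.eigenvectorUnitary.2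
  set y : Fin n → ℂ := star U *ᵥ x with hy
  have hsU : (star U)ᴴ = U := by rw [← star_eq_conjTranspose, star_star]
  have hstary : star y = star x ᵥ* U := by rw [hy, star_mulVec, hsU]
  refine ⟨fun i => Complex.normSq (y i), fun i => Complex.normSq_nonneg _, ?_, ?_⟩
  · have h1 : star x ⬝ᵥ x = star y ⬝ᵥ y := by
      rw [hstary, hy, ← dotProduct_mulVec, mulVec_mulVec, hUU, one_mulVec]
    rw [h1, dotProduct, Complex.re_sum]
    congr 1; ext i
    simp [Complex.mul_re, Complex.normSq_apply]
  · have h2 : star x ⬝ᵥ A *ᵥ x = star y ⬝ᵥ (Matrix.diagonal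
        (fun i => (hA.eigenvalues i : ℂ)) *ᵥ y) := by
      conv_lhs => rw [hA.spectral_theorem, Unitary.conjStarAlgAut_apply]
      rw [← hU, ← mulVec_mulVec, ← mulVec_mulVec, dotProduct_mulVec, ← hstary, ← hy]
      rfl
    rw [h2, dotProduct, Complex.re_sum]
    congr 1; ext i
    rw [mulVec_diagonal]
    simp [Complex.mul_re, Complex.normSq_apply]
    ring

lemma trace_eq {n : ℕ} {A : Matrix (Fin n) (Fin n) ℂ} (hA : A.IsHermitian) :
    A.trace = ((∑ i, hA.eigenvalues i : ℝ) : ℂ) := by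
  conv_lhs => rw [hA.spectral_theorem, Unitary.conjStarAlgAut_apply]
  rw [Matrix.trace_mul_cycle]
  rw [show (star (hA.eigenvectorUnitary : Matrix (Fin n) (Fin n) ℂ)) * hA.eigenvectorUnitary = 1 from
    Matrix.mem_unitaryGroup_iff'.mp hA.eigenvectorUnitary.2]
  simp [Matrix.trace, Matrix.diag]

lemma Rw_entry_sum {n : ℕ} (X : MixedGraph n) :
    ∑ i, ∑ j, Rw X i j = ((entrySum X : ℝ) : ℂ) := by
  classical
  set c : Fin n → Fin n → ℂ :=
    fun i j => ((1 / Real.sqrt ((deg X i : ℝ) * (deg X j : ℝ)) : ℝ) : ℂ) with hc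
  have hcsymm : ∀ i j, c i j = c j i := by
    intro i j; simp [hc, mul_comm]
  have hsplit : ∀ i j, Rw X i j =
      (if X.U i j then c i j else 0) + (if X.O i j then c i j * omegaC else 0)
        + (if X.O j i then c i j * ((starRingEnd ℂ) omegaC) else 0) := by
    intro i j
    rw [Rw, Hw]
    rcases hU : X.U i j
    · rcases hO : X.O i j
      · rcases hO' : X.O j i <;> simp [hU, hO, hO', hc, mul_comm]
      · have := X.O_asymm i j hO
        simp [hU, hO, this, hc, mul_comm]
    · have h1 := X.UO_disjoint i j hU
      have h2 := X.UO_disjoint j i (by rw [X.U_symm]; exact hU)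
      simp [hU, h1, h2, hc, mul_comm]
  calc ∑ i, ∑ j, Rw X i j
      = (∑ i, ∑ j, if X.U i j then c i j else 0)
        + ((∑ i, ∑ j, if X.O i j then c i j * omegaC else 0)
        + (∑ i, ∑ j, if X.O j i then c i j * ((starRingEnd ℂ) omegaC) else 0)) := by
        simp only [hsplit, Finset.sum_add_distrib, add_assoc]
    _ = (∑ i, ∑ j, if X.U i j then c i j else 0)
        + (∑ i, ∑ j, if X.O i j then c i j else 0) := by
        congr 1
        rw [Finset.sum_comm (s := univ) (t := univ)
          (f := fun i j => if X.O j i then c i j * ((starRingEnd ℂ) omegaC) else 0)]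
        rw [← Finset.sum_add_distrib]
        congr 1; ext i
        rw [← Finset.sum_add_distrib]
        congr 1; ext j
        rcases hO : X.O i j
        · simp [hO]
        · simp only [hO, if_true, hcsymm j i]
          rw [omegaC_conj]; ring
    _ = ((entrySum X : ℝ) : ℂ) := by
        rw [entrySum]
        push_cast
        congr 1 <;> (congr 1 <;> (ext i; congr 1; ext j; split <;> simp [hc]))

theorem stmt10 {n : ℕ} (hn : 2 ≤ n) (X : MixedGraph n)
    (hA : (Rw X).IsHermitian) (l1 ln : ℝ)
    (h1 : (∀ i, l1 ≤ hA.eigenvalues i) ∧ ∃ i, hA.eigenvalues i = l1)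
    (h2 : (∀ i, hA.eigenvalues i ≤ ln) ∧ ∃ i, hA.eigenvalues i = ln) :
    l1 ≤ -entrySum X / ((n : ℝ) * ((n : ℝ) - 1)) ∧ entrySum X / (n : ℝ) ≤ ln := by
  classical
  obtain ⟨hlow, _⟩ := h1
  obtain ⟨hup, i2, hi2⟩ := h2
  set S := entrySum X with hS
  have hnR : (2 : ℝ) ≤ (n : ℝ) := by exact_mod_cast hn
  have hnpos : (0 : ℝ) < n := by linarith
  -- sum of eigenvalues is zero
  have hdiag : ∀ i, Rw X i i = 0 := by
    intro i
    simp [Rw, Hw, X.U_irrefl, X.O_irrefl]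
  have htr0 : ∑ i, hA.eigenvalues i = 0 := by
    have h := trace_eq hA
    have : (Rw X).trace = 0 := by
      simp [Matrix.trace, Matrix.diag, hdiag]
    rw [this] at h
    exact_mod_cast h.symm
  -- Rayleigh with the all-ones vector
  obtain ⟨w, hw0, hwsum, hwval⟩ := rayleigh hA (fun _ => (1 : ℂ))
  have hones : (star (fun _ : Fin n => (1:ℂ)) ⬝ᵥ (fun _ => (1:ℂ))).re = (n : ℝ) := by
    simp [dotProduct]
  have hquad : (star (fun _ : Fin n => (1:ℂ)) ⬝ᵥ Rw X *ᵥ (fun _ => (1:ℂ))).re = S := by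
    have : star (fun _ : Fin n => (1:ℂ)) ⬝ᵥ Rw X *ᵥ (fun _ => (1:ℂ))
        = ∑ i, ∑ j, Rw X i j := by
      simp [dotProduct, mulVec]
    rw [this, Rw_entry_sum]
    simp [hS]
  rw [hones] at hwsum
  rw [hquad] at hwval
  -- S ≤ ln * n
  have hSln : S ≤ ln * (n : ℝ) := by
    calc S = ∑ i, hA.eigenvalues i * w i := hwval
      _ ≤ ∑ i, ln * w i := Finset.sum_le_sum (fun i _ =>
          mul_le_mul_of_nonneg_right (hup i) (hw0 i))
      _ = ln * ∑ i, w i := by rw [Finset.mul_sum]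
      _ = ln * (n : ℝ) := by rw [← hwsum]
  constructor
  · -- l1 ≤ -S / (n (n-1))
    have herase : ∑ i ∈ univ.erase i2, hA.eigenvalues i = -ln := by
      have := Finset.add_sum_erase univ hA.eigenvalues (Finset.mem_univ i2)
      rw [htr0, hi2] at this
      linarith
    have hcard : ((univ.erase i2).card : ℝ) = (n : ℝ) - 1 := by
      rw [Finset.card_erase_of_mem (Finset.mem_univ i2)]
      simp only [Finset.card_univ, Fintype.card_fin]
      have : 1 ≤ n := by omega
      push_cast [Nat.cast_sub this]
      ring
    have hl1 : ((n : ℝ) - 1) * l1 ≤ -ln := by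
      calc ((n : ℝ) - 1) * l1 = ∑ _i ∈ univ.erase i2, l1 := by
            rw [Finset.sum_const, nsmul_eq_mul, hcard]
        _ ≤ ∑ i ∈ univ.erase i2, hA.eigenvalues i :=
            Finset.sum_le_sum (fun i _ => hlow i)
        _ = -ln := herase
    have hpos : (0 : ℝ) < (n : ℝ) * ((n : ℝ) - 1) := by nlinarith
    rw [le_div_iff₀ hpos]
    have h3 : (((n : ℝ) - 1) * l1) * (n : ℝ) ≤ (-ln) * (n : ℝ) :=
      mul_le_mul_of_nonneg_right hl1 hnpos.le
    nlinarith
  · rw [div_le_iff₀ hnpos]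
    linarith
end

section
/- Let X be a mixed graph on n ≥ 2 vertices, and λ_1, λ_n the smallest and largest eigenvalues of R^ω(X). Then λ_n − λ_1 ≥ (1/(n−1)) ( ∑_{i∼j} 2/√(d_i d_j) + ∑_{i→j} 1/√(d_i d_j) ). -/
open Matrix Finset

lemma omega_add_conj : omegaC + (starRingEnd ℂ) omegaC = 1 := by
  rw [omegaC, map_div₀, map_add, _root_.map_mul, Complex.conj_I, Complex.conj_ofReal,
    _root_.map_one, map_ofNat]
  ring

noncomputable def cR {n : ℕ} (X : MixedGraph n) (i j : Fin n) : ℝ :=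
  1 / Real.sqrt ((deg X i : ℝ) * (deg X j : ℝ))

lemma cR_symm {n : ℕ} (X : MixedGraph n) (i j : Fin n) : cR X j i = cR X i j := by
  rw [cR, cR, mul_comm]

lemma Rw_apply_eq {n : ℕ} (X : MixedGraph n) (i j : Fin n) :
    Rw X i j =
      (if X.U i j then ((cR X i j : ℝ) : ℂ) else 0)
      + ((if X.O i j then ((cR X i j : ℝ) : ℂ) * omegaC else 0)
      + (if X.O j i then ((cR X i j : ℝ) : ℂ) * (starRingEnd ℂ) omegaC else 0)) := by
  show ((cR X i j : ℝ) : ℂ) * Hw X i j = _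
  unfold Hw
  cases hU : X.U i j with
  | true =>
    have h1 := X.UO_disjoint i j hU
    have h2 : X.O j i = false := X.UO_disjoint j i (by rw [← X.U_symm]; exact hU)
    simp [hU, h1, h2]
  | false =>
    cases hO : X.O i j with
    | true => simp [hU, hO, X.O_asymm i j hO]
    | false =>
      cases hO' : X.O j i with
      | true => simp [hU, hO, hO']
      | false => simp [hU, hO, hO']

lemma sum_Rw_eq {n : ℕ} (X : MixedGraph n) :
    ∑ i, ∑ j, Rw X i j = (entrySum X : ℂ) := by
  have h3 : (∑ i, ∑ j, if X.O j i then ((cR X i j : ℝ) : ℂ) * (starRingEnd ℂ) omegaC else 0)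
      = ∑ i, ∑ j, if X.O i j then ((cR X i j : ℝ) : ℂ) * (starRingEnd ℂ) omegaC else 0 := by
    rw [Finset.sum_comm]
    exact Finset.sum_congr rfl fun i _ => Finset.sum_congr rfl fun j _ => by rw [cR_symm]
  simp_rw [Rw_apply_eq, Finset.sum_add_distrib]
  rw [h3, ← Finset.sum_add_distrib]
  simp_rw [← Finset.sum_add_distrib]
  have h4 : ∀ i j : Fin n,
      ((if X.O i j then ((cR X i j : ℝ) : ℂ) * omegaC else 0)
        + (if X.O i j then ((cR X i j : ℝ) : ℂ) * (starRingEnd ℂ) omegaC else 0))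
      = (if X.O i j then ((cR X i j : ℝ) : ℂ) else 0) := by
    intro i j
    by_cases h : X.O i j = true
    · simp only [h, if_true, ← mul_add, omega_add_conj, mul_one]
    · simp [h]
  simp_rw [h4, Finset.sum_add_distrib]
  rw [entrySum]
  push_cast [apply_ite (Complex.ofReal), cR]
  norm_num

lemma sum_eig_zero {n : ℕ} (A : Matrix (Fin n) (Fin n) ℂ) (hA : A.IsHermitian)
    (htr : A.trace = 0) : ∑ k, hA.eigenvalues k = 0 := by
  have h2 : A.trace = ∑ k, (hA.eigenvalues k : ℂ) := by
    conv_lhs => rw [hA.spectral_theorem, Unitary.conjStarAlgAut_apply]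
    rw [Matrix.trace_mul_cycle,
      show (star (hA.eigenvectorUnitary : Matrix (Fin n) (Fin n) ℂ))
          * (hA.eigenvectorUnitary : Matrix (Fin n) (Fin n) ℂ) = 1 from
        mem_unitaryGroup_iff'.mp hA.eigenvectorUnitary.2,
      one_mul, Matrix.trace_diagonal]
    rfl
  rw [htr] at h2
  exact_mod_cast h2.symm

lemma rayleigh_bound {n : ℕ} (A : Matrix (Fin n) (Fin n) ℂ) (hA : A.IsHermitian) (ln : ℝ)
    (hln : ∀ i, hA.eigenvalues i ≤ ln) (S : ℝ) (hS : ∑ i, ∑ j, A i j = (S : ℂ)) :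
    S ≤ n * ln := by
  set V : Matrix (Fin n) (Fin n) ℂ := (hA.eigenvectorUnitary : Matrix (Fin n) (Fin n) ℂ) with hV
  set s : Fin n → ℂ := fun k => ∑ i, V i k with hs
  have hVV : V * star V = 1 := mem_unitaryGroup_iff.mp hA.eigenvectorUnitary.2
  have hentry : ∀ i j, A i j = ∑ l, V i l * (hA.eigenvalues l : ℂ) * star (V j l) := by
    intro i j
    conv_lhs => rw [hA.spectral_theorem, Unitary.conjStarAlgAut_apply]
    rw [Matrix.mul_apply]
    exact Finset.sum_congr rfl fun l _ => by
      rw [Matrix.mul_diagonal, Matrix.star_apply]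
      rfl
  have hsum : ∑ i, ∑ j, A i j = ∑ l, (hA.eigenvalues l : ℂ) * (s l * star (s l)) := by
    simp_rw [hentry]
    rw [Finset.sum_comm]
    have swap : ∀ j : Fin n, (∑ i, ∑ l, V i l * (hA.eigenvalues l : ℂ) * star (V j l))
        = ∑ l, ∑ i, V i l * (hA.eigenvalues l : ℂ) * star (V j l) :=
      fun j => Finset.sum_comm
    simp_rw [swap]
    rw [Finset.sum_comm]
    refine Finset.sum_congr rfl fun l _ => ?_
    simp only [hs, ← Finset.mul_sum, ← Finset.sum_mul, ← star_sum]
    ring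
  have hnorm : ∑ l, s l * star (s l) = (n : ℂ) := by
    have : ∀ l, s l * star (s l) = ∑ i, ∑ j, V i l * star (V j l) := by
      intro l
      simp only [hs, ← Finset.mul_sum, ← Finset.sum_mul, ← star_sum]
    simp_rw [this]
    rw [Finset.sum_comm]
    have swap : ∀ i : Fin n, (∑ l, ∑ j, V i l * star (V j l))
        = ∑ j, ∑ l, V i l * star (V j l) := fun i => Finset.sum_comm
    simp_rw [swap]
    have : ∀ i j : Fin n, (∑ l, V i l * star (V j l)) = (V * star V) i j := by
      intro i j
      rw [Matrix.mul_apply]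
      exact Finset.sum_congr rfl fun l _ => by rw [Matrix.star_apply]
    simp_rw [this, hVV, Matrix.one_apply]
    simp
  have hmc : ∀ l, s l * star (s l) = ((Complex.normSq (s l) : ℝ) : ℂ) := by
    intro l
    rw [← Complex.mul_conj]
    rfl
  have hSr : S = ∑ l, hA.eigenvalues l * Complex.normSq (s l) := by
    have := hS.symm.trans hsum
    simp_rw [hmc] at this
    exact_mod_cast this
  have hnr : ∑ l, Complex.normSq (s l) = (n : ℝ) := by
    simp_rw [hmc] at hnorm
    exact_mod_cast hnorm
  rw [hSr]
  calc ∑ l, hA.eigenvalues l * Complex.normSq (s l)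
      ≤ ∑ l, ln * Complex.normSq (s l) := by
        refine Finset.sum_le_sum fun l _ => ?_
        exact mul_le_mul_of_nonneg_right (hln l) (Complex.normSq_nonneg _)
    _ = ln * (n : ℝ) := by rw [← Finset.mul_sum, hnr]
    _ = n * ln := mul_comm _ _


theorem stmt11 {n : ℕ} (hn : 2 ≤ n) (X : MixedGraph n)
    (hA : (Rw X).IsHermitian) (l1 ln : ℝ)
    (h1 : (∀ i, l1 ≤ hA.eigenvalues i) ∧ ∃ i, hA.eigenvalues i = l1)
    (h2 : (∀ i, hA.eigenvalues i ≤ ln) ∧ ∃ i, hA.eigenvalues i = ln) :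
    ln - l1 ≥ (1 / ((n : ℝ) - 1)) * entrySum X := by
  obtain ⟨h1a, i1, hi1⟩ := h1
  obtain ⟨h2a, i2, hi2⟩ := h2
  have hn1 : (0 : ℝ) < (n : ℝ) - 1 := by
    have : (2 : ℝ) ≤ (n : ℝ) := by exact_mod_cast hn
    linarith
  -- trace is zero
  have htr : (Rw X).trace = 0 := by
    apply Finset.sum_eq_zero
    intro i _
    simp [Matrix.diag, Rw, Hw, X.U_irrefl i, X.O_irrefl i]
  have hzero : ∑ k, hA.eigenvalues k = 0 := sum_eig_zero _ hA htr
  -- Rayleigh bound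
  have hray : entrySum X ≤ n * ln := rayleigh_bound _ hA ln h2a _ (sum_Rw_eq X)
  -- min eigenvalue bound from trace
  have hl1 : ((n : ℝ) - 1) * l1 ≤ -ln := by
    have hsplit : ∑ k ∈ Finset.univ.erase i2, hA.eigenvalues k + hA.eigenvalues i2
        = ∑ k, hA.eigenvalues k := Finset.sum_erase_add _ _ (Finset.mem_univ i2)
    have hcard : (Finset.univ.erase i2).card = n - 1 := by
      rw [Finset.card_erase_of_mem (Finset.mem_univ i2), Finset.card_univ, Fintype.card_fin]
    have hlb : ((n : ℝ) - 1) * l1 ≤ ∑ k ∈ Finset.univ.erase i2, hA.eigenvalues k := by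
      have := Finset.card_nsmul_le_sum (Finset.univ.erase i2) hA.eigenvalues l1
        (fun k _ => h1a k)
      rw [hcard] at this
      have hcast : ((n - 1 : ℕ) : ℝ) = (n : ℝ) - 1 := by
        have : 1 ≤ n := le_trans (by norm_num) hn
        push_cast [this]
        ring
      calc ((n : ℝ) - 1) * l1 = ((n - 1 : ℕ) : ℝ) * l1 := by rw [hcast]
        _ = (n - 1) • l1 := (nsmul_eq_mul _ _).symm
        _ ≤ _ := this
    have : ((n : ℝ) - 1) * l1 + ln ≤ 0 := by
      rw [← hzero, ← hsplit, ← hi2]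
      exact add_le_add_left hlb _
    linarith
  rw [ge_iff_le, one_div, inv_mul_le_iff₀ hn1]
  nlinarith [hray, hl1]
end

section
/- Let λ_1,…,λ_n be the eigenvalues of an n×n Hermitian matrix A with ∑λ_i² = 2R and determinant det A. Then √(2R + n(n−1)(|det A|)^{2/n}) ≤ ∑|λ_i| ≤ √(2nR). -/
open Matrix Finset

theorem stmt12 {n : ℕ} (A : Matrix (Fin n) (Fin n) ℂ) (hA : A.IsHermitian)
    (R : ℝ) (h2 : ∑ i, (hA.eigenvalues i) ^ 2 = 2 * R) :
    Real.sqrt (2 * R + (n : ℝ) * ((n : ℝ) - 1)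
        * ‖A.det‖ ^ ((2 : ℝ) / (n : ℝ)))
      ≤ ∑ i, |hA.eigenvalues i|
    ∧ ∑ i, |hA.eigenvalues i| ≤ Real.sqrt (2 * (n : ℝ) * R) := by
  set a : Fin n → ℝ := fun i => |hA.eigenvalues i| with ha
  have ha0 : ∀ i, 0 ≤ a i := fun i => abs_nonneg _
  have hsum2 : ∑ i, a i ^ 2 = 2 * R := by simpa [ha, sq_abs] using h2
  have hε0 : 0 ≤ ∑ i, a i := Finset.sum_nonneg fun i _ => ha0 i
  have hS0 : 0 ≤ ∑ p ∈ Finset.univ.offDiag (α := Fin n), a p.1 * a p.2 :=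
    Finset.sum_nonneg fun p _ => mul_nonneg (ha0 _) (ha0 _)
  have hsq : (∑ i, a i) ^ 2
      = 2 * R + ∑ p ∈ Finset.univ.offDiag (α := Fin n), a p.1 * a p.2 := by
    rw [sq, Finset.sum_mul_sum, ← Finset.sum_product', ← Finset.diag_union_offDiag,
      Finset.sum_union (Finset.disjoint_diag_offDiag _), Finset.sum_diag]
    simp only [← sq, hsum2]
  have hdet : ‖A.det‖ = ∏ i, a i := by
    rw [hA.det_eq_prod_eigenvalues, norm_prod]
    simp [ha]
  constructor
  · -- lower bound
    have key : (n : ℝ) * ((n : ℝ) - 1) * ‖A.det‖ ^ ((2 : ℝ) / (n : ℝ))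
        ≤ ∑ p ∈ Finset.univ.offDiag (α := Fin n), a p.1 * a p.2 := by
      rcases le_or_gt n 1 with hn | hn
      · interval_cases n <;> simp
      · -- n ≥ 2
        have hn0 : (0 : ℝ) < n := by positivity
        have hn1 : (0 : ℝ) < (n : ℝ) - 1 := by
          have : (1 : ℝ) < n := by exact_mod_cast hn
          linarith
        by_cases hzero : ∃ i, a i = 0
        · obtain ⟨i, hi⟩ := hzero
          have : (∏ i, a i) = 0 := Finset.prod_eq_zero (Finset.mem_univ i) hi
          rw [hdet, this, Real.zero_rpow (by positivity), mul_zero]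
          exact hS0
        · push_neg at hzero
          have hapos : ∀ i, 0 < a i := fun i => (ha0 i).lt_of_ne' (hzero i)
          have hP : (0 : ℝ) < ∏ i, a i := Finset.prod_pos fun i _ => hapos i
          set N : ℕ := n * n - n with hN
          have hcard : (Finset.univ.offDiag (α := Fin n)).card = N := by
            simp [hN, Finset.offDiag_card]
          have hle : n ≤ n * n := by nlinarith
          have hNpos : 0 < N := by
            have h2 : 2 ≤ n := hn
            have := Nat.mul_le_mul_left n h2
            omega
          have hNr : (N : ℝ) = (n : ℝ) * ((n : ℝ) - 1) := by
            rw [hN, Nat.cast_sub hle]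
            push_cast; ring
          have hNr0 : (0 : ℝ) < N := by positivity
          -- AM-GM
          have amgm := Real.geom_mean_le_arith_mean_weighted
            (Finset.univ.offDiag (α := Fin n)) (fun _ => (N : ℝ)⁻¹)
            (fun p => a p.1 * a p.2)
            (fun i _ => by positivity)
            (by simp [hcard, mul_inv_cancel₀ (ne_of_gt hNr0)])
            (fun p _ => mul_nonneg (ha0 _) (ha0 _))
          -- compute product on LHS
          have hprodOff : (∏ p ∈ Finset.univ.offDiag (α := Fin n), a p.1 * a p.2)
              = (∏ i, a i) ^ (2 * n - 2) := by
            have hfull : (∏ p ∈ (Finset.univ : Finset (Fin n)) ×ˢ (Finset.univ : Finset (Fin n)),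
                a p.1 * a p.2) = (∏ i, a i) ^ (2 * n) := by
              rw [Finset.prod_mul_distrib, Finset.prod_product, Finset.prod_product_right]
              simp only [Finset.prod_const, Finset.card_univ, Fintype.card_fin,
                Finset.prod_pow]
              rw [← pow_add, two_mul]
            have h1 : (∏ p ∈ Finset.univ.offDiag (α := Fin n), a p.1 * a p.2)
                * (∏ i, a i) ^ 2 = (∏ i, a i) ^ (2 * n) := by
              rw [← hfull, ← Finset.diag_union_offDiag,
                Finset.prod_union (Finset.disjoint_diag_offDiag _), Finset.prod_diag, sq,
                ← Finset.prod_mul_distrib]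
              ring
            have h2n : 2 * n = (2 * n - 2) + 2 := by omega
            rw [h2n, pow_add] at h1
            exact mul_right_cancel₀ (by positivity) h1
          have hLHS : ∏ p ∈ Finset.univ.offDiag (α := Fin n),
              (a p.1 * a p.2) ^ ((N : ℝ)⁻¹) = (∏ i, a i) ^ ((2 : ℝ) / (n : ℝ)) := by
            rw [Real.finset_prod_rpow _ _ (fun p _ => mul_nonneg (ha0 _) (ha0 _)),
              hprodOff, ← Real.rpow_natCast (∏ i, a i) (2 * n - 2), ← Real.rpow_mul hP.le]
            congr 1
            have h2n2 : ((2 * n - 2 : ℕ) : ℝ) = 2 * (n : ℝ) - 2 := by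
              push_cast [Nat.cast_sub (by omega : 2 ≤ 2 * n)]; ring
            rw [h2n2, hNr]
            field_simp
          rw [hLHS] at amgm
          rw [← Finset.mul_sum] at amgm
          rw [hdet]
          calc (n : ℝ) * ((n : ℝ) - 1) * (∏ i, a i) ^ ((2 : ℝ) / (n : ℝ))
              ≤ (n : ℝ) * ((n : ℝ) - 1) * ((N : ℝ)⁻¹
                * ∑ p ∈ Finset.univ.offDiag (α := Fin n), a p.1 * a p.2) := by
                apply mul_le_mul_of_nonneg_left amgm (by positivity)
            _ = ∑ p ∈ Finset.univ.offDiag (α := Fin n), a p.1 * a p.2 := by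
                rw [← hNr]; field_simp
    have : 2 * R + (n : ℝ) * ((n : ℝ) - 1) * ‖A.det‖ ^ ((2 : ℝ) / (n : ℝ))
        ≤ (∑ i, a i) ^ 2 := by rw [hsq]; linarith
    calc Real.sqrt (2 * R + (n : ℝ) * ((n : ℝ) - 1)
          * ‖A.det‖ ^ ((2 : ℝ) / (n : ℝ)))
        ≤ Real.sqrt ((∑ i, a i) ^ 2) := Real.sqrt_le_sqrt this
      _ = ∑ i, a i := Real.sqrt_sq hε0
  · -- upper bound
    have hcs : (∑ i, a i) ^ 2 ≤ 2 * (n : ℝ) * R := by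
      have := sq_sum_le_card_mul_sum_sq (s := (Finset.univ : Finset (Fin n))) (f := a)
      simp only [Finset.card_univ, Fintype.card_fin, hsum2] at this
      calc (∑ i, a i) ^ 2 ≤ (n : ℝ) * (2 * R) := this
        _ = 2 * (n : ℝ) * R := by ring
    calc ∑ i, a i = Real.sqrt ((∑ i, a i) ^ 2) := (Real.sqrt_sq hε0).symm
      _ ≤ Real.sqrt (2 * (n : ℝ) * R) := Real.sqrt_le_sqrt hcs
end

section
/- Let λ_1,…,λ_n be the eigenvalues of an n×n Hermitian matrix with trace 0 and ∑λ_i² = 2R, and let ρ = max_i |λ_i|. Then ε = ∑|λ_i| satisfies ε ≤ (1/2)(ρ(n−2) + √(ρ²(n−2)² + 8·(2R))). -/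
open Matrix Finset

lemma aux_sum_sq16 {ι : Type*} (S : Finset ι) (f : ι → ℝ) (rho : ℝ)
    (hf0 : ∀ i ∈ S, 0 ≤ f i) (hfr : ∀ i ∈ S, f i ≤ rho) :
    (∑ i ∈ S, f i) ^ 2 ≤ ∑ i ∈ S, (f i) ^ 2
      + rho * ((S.card : ℝ) - 1) * ∑ i ∈ S, f i := by
  set P := ∑ i ∈ S, f i with hP
  have hkey : ∀ i ∈ S, f i * P ≤ (f i) ^ 2 + rho * (P - f i) := by
    intro i hi
    have h1 : f i ≤ P := Finset.single_le_sum hf0 hi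
    nlinarith [hf0 i hi, hfr i hi]
  have hsum := Finset.sum_le_sum hkey
  have h3 : ∑ i ∈ S, f i * P = P ^ 2 := by rw [← Finset.sum_mul]; ring
  have h4 : ∑ i ∈ S, ((f i) ^ 2 + rho * (P - f i))
      = ∑ i ∈ S, (f i) ^ 2 + rho * ((S.card : ℝ) * P - P) := by
    rw [Finset.sum_add_distrib, ← Finset.mul_sum, Finset.sum_sub_distrib,
      Finset.sum_const, nsmul_eq_mul]
  rw [h3, h4] at hsum
  nlinarith [hsum]

theorem stmt16 {n : ℕ} (A : Matrix (Fin n) (Fin n) ℂ) (hA : A.IsHermitian)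
    (htr : A.trace = 0) (R : ℝ)
    (h2 : ∑ i, (hA.eigenvalues i) ^ 2 = 2 * R)
    (rho : ℝ) (hrho : (∀ i, |hA.eigenvalues i| ≤ rho) ∧ ∃ i, |hA.eigenvalues i| = rho) :
    ∑ i, |hA.eigenvalues i|
      ≤ (1 / 2) * (rho * ((n : ℝ) - 2)
          + Real.sqrt (rho ^ 2 * ((n : ℝ) - 2) ^ 2 + 16 * R)) := by
  set μ : Fin n → ℝ := hA.eigenvalues with hμ
  -- sum of eigenvalues is zero
  have h0 : ∑ i, μ i = 0 := by
    have ht : A.trace = ∑ i, (μ i : ℂ) := by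
      conv_lhs => rw [hA.spectral_theorem]
      rw [Unitary.conjStarAlgAut_apply, Matrix.trace_mul_cycle, Unitary.coe_star_mul_self, Matrix.one_mul,
        Matrix.trace_diagonal]
      rfl
    rw [htr] at ht
    have : ((∑ i, μ i : ℝ) : ℂ) = 0 := by push_cast; rw [← ht]
    exact_mod_cast this
  set S : Finset (Fin n) := Finset.univ.filter (fun i => 0 < μ i) with hS
  set T : Finset (Fin n) := Finset.univ.filter (fun i => μ i < 0) with hT
  set P : ℝ := ∑ i ∈ S, μ i with hPdef
  set N : ℝ := ∑ i ∈ T, (-μ i) with hNdef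
  have hPmax : ∑ i, max (μ i) 0 = P := by
    rw [hPdef, Finset.sum_filter]
    refine Finset.sum_congr rfl (fun i _ => ?_)
    split_ifs with h
    · exact max_eq_left h.le
    · exact max_eq_right (not_lt.mp h)
  have hNmax : ∑ i, max (-μ i) 0 = N := by
    rw [hNdef, Finset.sum_filter]
    refine Finset.sum_congr rfl (fun i _ => ?_)
    split_ifs with h
    · exact max_eq_left (by linarith)
    · exact max_eq_right (by push_neg at h; linarith)
  have heps : ∑ i, |μ i| = P + N := by
    rw [← hPmax, ← hNmax, ← Finset.sum_add_distrib]
    refine Finset.sum_congr rfl (fun i _ => ?_)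
    rcases le_total 0 (μ i) with h | h
    · rw [abs_of_nonneg h, max_eq_left h, max_eq_right (by linarith)]; ring
    · rw [abs_of_nonpos h, max_eq_right h, max_eq_left (by linarith)]; ring
  have hPN : P = N := by
    have : ∑ i, (max (μ i) 0 - max (-μ i) 0) = P - N := by
      rw [Finset.sum_sub_distrib, hPmax, hNmax]
    have h5 : ∑ i, (max (μ i) 0 - max (-μ i) 0) = ∑ i, μ i := by
      refine Finset.sum_congr rfl (fun i _ => ?_)
      rcases le_total 0 (μ i) with h | h
      · rw [max_eq_left h, max_eq_right (by linarith)]; ring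
      · rw [max_eq_right h, max_eq_left (by linarith)]; ring
    rw [h5, h0] at this
    linarith
  have hdisj : Disjoint S T := by
    rw [Finset.disjoint_left]
    intro i hi1 hi2
    rw [hS, Finset.mem_filter] at hi1
    rw [hT, Finset.mem_filter] at hi2
    linarith [hi1.2, hi2.2]
  have hcard : (S.card : ℝ) + (T.card : ℝ) ≤ (n : ℝ) := by
    have h6 : (S ∪ T).card ≤ n := by
      simpa using Finset.card_le_univ (S ∪ T)
    rw [Finset.card_union_of_disjoint hdisj] at h6
    exact_mod_cast h6
  have hsq : ∑ i ∈ S, (μ i) ^ 2 + ∑ i ∈ T, (-μ i) ^ 2 ≤ 2 * R := by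
    have h7 : ∑ i ∈ T, (-μ i) ^ 2 = ∑ i ∈ T, (μ i) ^ 2 := by
      refine Finset.sum_congr rfl (fun i _ => ?_); ring
    rw [h7, ← Finset.sum_union hdisj, ← h2]
    exact Finset.sum_le_sum_of_subset_of_nonneg (Finset.subset_univ _)
      (fun i _ _ => sq_nonneg _)
  have claimS := aux_sum_sq16 S μ rho
    (fun i hi => le_of_lt (Finset.mem_filter.mp hi).2)
    (fun i hi => le_trans (le_abs_self _) (hrho.1 i))
  have claimT : N ^ 2 ≤ ∑ i ∈ T, (-μ i) ^ 2 + rho * ((T.card : ℝ) - 1) * N :=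
    aux_sum_sq16 T (fun i => -μ i) rho
      (fun i hi => by have := (Finset.mem_filter.mp hi).2; show (0:ℝ) ≤ -μ i; linarith)
      (fun i hi => by show -μ i ≤ rho; exact le_trans (neg_le_abs _) (hrho.1 i))
  rw [← hPdef] at claimS
  have hP0 : 0 ≤ P :=
    Finset.sum_nonneg (fun i hi => le_of_lt (Finset.mem_filter.mp hi).2)
  have hρ0 : 0 ≤ rho := by
    obtain ⟨i, hi⟩ := hrho.2
    linarith [abs_nonneg (μ i)]
  -- key quadratic inequality
  have hkey : 2 * P ^ 2 ≤ 2 * R + rho * ((n : ℝ) - 2) * P := by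
    have hcards : (0:ℝ) ≤ ((n:ℝ) - ((S.card : ℝ) + (T.card : ℝ))) := by linarith
    rw [← hPN] at claimT
    nlinarith [claimS, claimT, hsq, hP0, hρ0,
      mul_nonneg (mul_nonneg hρ0 hP0) hcards]
  have hR : 0 ≤ R := by
    have : (0:ℝ) ≤ ∑ i, (μ i) ^ 2 := Finset.sum_nonneg (fun i _ => sq_nonneg _)
    linarith [h2 ▸ this]
  set b : ℝ := rho * ((n : ℝ) - 2) with hb
  set s : ℝ := Real.sqrt (rho ^ 2 * ((n : ℝ) - 2) ^ 2 + 16 * R) with hsdef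
  have hs0 : 0 ≤ s := Real.sqrt_nonneg _
  have hs2 : s ^ 2 = b ^ 2 + 16 * R := by
    rw [hsdef, Real.sq_sqrt (by positivity)]
    ring
  rw [heps]
  nlinarith [hkey, hs0, hs2, hP0, sq_nonneg (P + N - b - s), mul_nonneg hs0 (by linarith : (0:ℝ) ≤ P + N), hPN]
end

section
/- Let λ_1,…,λ_n be the eigenvalues of an n×n Hermitian matrix with trace 0 and ∑λ_i² = 2R, and let σ = min_i |λ_i|. Then ε = ∑|λ_i| satisfies ε ≥ (1/2)(σ(n−2) + √(σ²(n−2)² + 16R)). -/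
open Matrix Finset

lemma lemA {n : ℕ} (s : Finset (Fin n)) (f : Fin n → ℝ) (σ : ℝ) (hσ0 : 0 ≤ σ)
    (hf : ∀ i ∈ s, σ ≤ f i) :
    (∑ i ∈ s, f i)^2 ≥ ∑ i ∈ s, (f i)^2 + σ * ((s.card : ℝ) - 1) * ∑ i ∈ s, f i := by
  set P := ∑ i ∈ s, f i with hP
  have hpoint : ∀ i ∈ s, σ/2 * ((P - f i) + ((s.card : ℝ) - 1) * f i) ≤ f i * (P - f i) := by
    intro i hi
    have h1 : σ ≤ f i := hf i hi
    have hcard : 1 ≤ s.card := Finset.card_pos.mpr ⟨i, hi⟩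
    have hc1 : (1:ℝ) ≤ (s.card : ℝ) := by exact_mod_cast hcard
    have h2 : σ * ((s.card : ℝ) - 1) ≤ P - f i := by
      have hle : (s.erase i).card • σ ≤ ∑ j ∈ s.erase i, f j :=
        Finset.card_nsmul_le_sum _ _ _ (fun j hj => hf j (Finset.mem_of_mem_erase hj))
      have hsum : ∑ j ∈ s.erase i, f j = P - f i := by
        rw [hP, ← Finset.sum_erase_add s f hi]; ring
      rw [hsum, Finset.card_erase_of_mem hi, nsmul_eq_mul, Nat.cast_sub hcard] at hle
      push_cast at hle
      nlinarith [hle]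
    have hPf : 0 ≤ P - f i := le_trans (by nlinarith) h2
    have hA' : 0 ≤ (f i - σ) * (P - f i) := mul_nonneg (by linarith) hPf
    have hB : 0 ≤ f i * ((P - f i) - σ * ((s.card : ℝ) - 1)) :=
      mul_nonneg (by linarith) (by linarith)
    nlinarith [hA', hB]
  have hsum := Finset.sum_le_sum hpoint
  have e1 : ∑ i ∈ s, f i * (P - f i) = P^2 - ∑ i ∈ s, (f i)^2 := by
    simp_rw [mul_sub, ← sq, Finset.sum_sub_distrib, ← Finset.sum_mul, ← hP]; ring
  have e2 : ∑ i ∈ s, (σ/2 * ((P - f i) + ((s.card : ℝ) - 1) * f i)) =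
      σ * ((s.card : ℝ) - 1) * P := by
    rw [← Finset.mul_sum]
    simp_rw [Finset.sum_add_distrib, Finset.sum_sub_distrib, Finset.sum_const, ← Finset.mul_sum,
      ← hP, nsmul_eq_mul]
    ring
  rw [e1, e2] at hsum
  linarith

theorem stmt17 {n : ℕ} (A : Matrix (Fin n) (Fin n) ℂ) (hA : A.IsHermitian)
    (htr : A.trace = 0) (R : ℝ)
    (h2 : ∑ i, (hA.eigenvalues i) ^ 2 = 2 * R)
    (sig : ℝ) (hsig : (∀ i, sig ≤ |hA.eigenvalues i|) ∧ ∃ i, |hA.eigenvalues i| = sig) :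
    ∑ i, |hA.eigenvalues i|
      ≥ (1 / 2) * (sig * ((n : ℝ) - 2)
          + Real.sqrt (sig ^ 2 * ((n : ℝ) - 2) ^ 2 + 16 * R)) := by
  set e := hA.eigenvalues with he
  -- trace = sum of eigenvalues
  have htre : ∑ i, e i = 0 := by
    have h := hA.spectral_theorem
    have htr2 : A.trace = ∑ i, (e i : ℂ) := by
      conv_lhs => rw [h]
      rw [Unitary.conjStarAlgAut_apply, trace_mul_cycle, (Matrix.mem_unitaryGroup_iff').mp
        (Matrix.IsHermitian.eigenvectorUnitary hA).2, one_mul, trace_diagonal]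
      simp
      rfl
    rw [htr2] at htr
    have := congrArg Complex.re htr
    simpa using this
  obtain ⟨hsig1, i0, hi0⟩ := hsig
  have hσ0 : 0 ≤ sig := hi0 ▸ abs_nonneg _
  set s : Finset (Fin n) := Finset.univ.filter (fun i => 0 ≤ e i) with hs
  set t : Finset (Fin n) := Finset.univ.filter (fun i => ¬ 0 ≤ e i) with ht
  set P := ∑ i ∈ s, e i with hP
  set N := ∑ i ∈ t, (-e i) with hN
  have hsplit : ∀ g : Fin n → ℝ, ∑ i ∈ s, g i + ∑ i ∈ t, g i = ∑ i, g i := fun g =>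
    Finset.sum_filter_add_sum_filter_not _ _ _
  have hPN : P = N := by
    have := hsplit e
    rw [← hP] at this
    have hNt : ∑ i ∈ t, e i = -N := by rw [hN]; simp
    rw [hNt, htre] at this
    linarith
  have hEps : ∑ i, |e i| = P + N := by
    rw [← hsplit (fun i => |e i|), hP, hN]
    congr 1
    · exact Finset.sum_congr rfl fun i hi => abs_of_nonneg ((Finset.mem_filter.mp hi).2)
    · exact Finset.sum_congr rfl fun i hi =>
        abs_of_neg (lt_of_not_ge ((Finset.mem_filter.mp hi).2))
  set ε := ∑ i, |e i| with hε
  have hR : ∑ i ∈ s, (e i)^2 + ∑ i ∈ t, (-e i)^2 = 2 * R := by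
    rw [← h2, ← hsplit (fun i => (e i)^2)]
    congr 1
    exact Finset.sum_congr rfl fun i _ => by ring
  have hAs := lemA s e sig hσ0 (fun i hi => by
    have := hsig1 i
    rwa [abs_of_nonneg ((Finset.mem_filter.mp hi).2)] at this)
  have hAt := lemA t (fun i => -e i) sig hσ0 (fun i hi => by
    have := hsig1 i
    rwa [abs_of_neg (lt_of_not_ge ((Finset.mem_filter.mp hi).2))] at this)
  have hcard : (s.card : ℝ) + (t.card : ℝ) = n := by
    have h := Finset.card_filter_add_card_filter_not
      (s := (Finset.univ : Finset (Fin n))) (p := fun i => 0 ≤ e i)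
    rw [Finset.card_univ, Fintype.card_fin] at h
    exact_mod_cast h
  -- key inequality ε² ≥ sig (n-2) ε + 4R
  have key : ε^2 ≥ sig * ((n:ℝ) - 2) * ε + 4 * R := by
    simp only [← hP] at hAs
    simp only [← hN] at hAt
    have hε2 : ε^2 = 2*P^2 + 2*N^2 := by rw [hEps, hPN]; ring
    have hlin : 2*(sig*((s.card:ℝ)-1)*P) + 2*(sig*((t.card:ℝ)-1)*N)
        = sig * ((n:ℝ) - 2) * ε := by
      rw [hEps, ← hPN, ← hcard]; ring
    linarith [hAs, hAt, hR, hε2, hlin]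
  have hεnn : 0 ≤ ε := Finset.sum_nonneg fun i _ => abs_nonneg _
  have hσn : sig * ((n:ℝ) - 2) ≤ 2 * ε := by
    have hle : (Finset.univ : Finset (Fin n)).card • sig ≤ ∑ i, |e i| :=
      Finset.card_nsmul_le_sum _ _ _ (fun i _ => hsig1 i)
    rw [Finset.card_univ, Fintype.card_fin, nsmul_eq_mul] at hle
    nlinarith [hle, hσ0, hεnn]
  have hsq : Real.sqrt (sig ^ 2 * ((n : ℝ) - 2) ^ 2 + 16 * R)
      ≤ 2 * ε - sig * ((n:ℝ) - 2) := by
    have h1 : sig ^ 2 * ((n : ℝ) - 2) ^ 2 + 16 * R ≤ (2 * ε - sig * ((n:ℝ) - 2))^2 := by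
      nlinarith [key]
    calc Real.sqrt (sig ^ 2 * ((n : ℝ) - 2) ^ 2 + 16 * R)
        ≤ Real.sqrt ((2 * ε - sig * ((n:ℝ) - 2))^2) := Real.sqrt_le_sqrt h1
      _ = |2 * ε - sig * ((n:ℝ) - 2)| := Real.sqrt_sq_eq_abs _
      _ = 2 * ε - sig * ((n:ℝ) - 2) := abs_of_nonneg (by linarith)
  linarith
end

section
/- Let λ_1,…,λ_n be real numbers with ∑λ_i² = 2R, ρ = max_i |λ_i| and σ = min_i |λ_i|, and suppose 8nR ≥ n²(ρ−σ)². Then ∑_{i=1}^n |λ_i| ≥ (1/2)√(8nR − n²(ρ−σ)²). -/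
open Finset

theorem stmt19 {n : ℕ} (l : Fin n → ℝ) (R : ℝ)
    (h2 : ∑ i, (l i) ^ 2 = 2 * R)
    (rho sig : ℝ)
    (hrho : (∀ i, |l i| ≤ rho) ∧ ∃ i, |l i| = rho)
    (hsig : (∀ i, sig ≤ |l i|) ∧ ∃ i, |l i| = sig)
    (h : 8 * (n : ℝ) * R ≥ (n : ℝ) ^ 2 * (rho - sig) ^ 2) :
    ∑ i, |l i|
      ≥ (1 / 2) * Real.sqrt (8 * (n : ℝ) * R - (n : ℝ) ^ 2 * (rho - sig) ^ 2) := by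
  set S := ∑ i, |l i| with hSdef
  have hS : 0 ≤ S := Finset.sum_nonneg fun i _ => abs_nonneg _
  have key : ∀ i ∈ Finset.univ, (l i) ^ 2 ≤ (rho + sig) * |l i| - rho * sig := by
    intro i _
    have ha := hrho.1 i
    have hb := hsig.1 i
    nlinarith [sq_abs (l i), mul_nonneg (sub_nonneg.2 hb) (sub_nonneg.2 ha)]
  have hsum : 2 * R ≤ (rho + sig) * S - (n : ℝ) * (rho * sig) := by
    have hle := Finset.sum_le_sum key
    rw [h2] at hle
    rw [Finset.sum_sub_distrib, ← Finset.mul_sum, Finset.sum_const, Finset.card_univ,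
      Fintype.card_fin, nsmul_eq_mul] at hle
    linarith
  have hX : 8 * (n : ℝ) * R - (n : ℝ) ^ 2 * (rho - sig) ^ 2 ≤ (2 * S) ^ 2 := by
    nlinarith [sq_nonneg (2 * S - (n : ℝ) * (rho + sig)), (n.cast_nonneg : (0:ℝ) ≤ n)]
  have hs := Real.sqrt_le_sqrt hX
  rw [Real.sqrt_sq (by linarith)] at hs
  linarith
end
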